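/- Let G be a group with unique roots and let c, d ∈ G be elements of infinite order such that ⟨c⟩ ∩ ⟨d⟩ is infinite. Then N_G(⟨c⟩) = N_G(⟨d⟩). -/

import Mathlib

/-!
An element `g` normalizes `⟨x⟩` exactly when `⟨g x g⁻¹⟩ = ⟨x⟩`. With unique roots, taking
`n`-th powers (`n ≠ 0`) preserves and reflects equality of cyclic subgroups, so `⟨x⟩` and `⟨xⁿ⟩`
have the same normalizer. A nontrivial common element `cˢ = dᵗ` then links `⟨c⟩` to `⟨d⟩`.
-/

open Subgroup

def HasUniqueRoots (G : Type*) [Monoid G] : Prop :=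
  ∀ m : ℕ, 0 < m → ∀ f g : G, f ^ m = g ^ m → f = g

namespace HasUniqueRoots

variable {G : Type*} [Group G]

theorem zpow_injective (hG : HasUniqueRoots G) {n : ℤ} (hn : n ≠ 0) {f g : G}
    (hfg : f ^ n = g ^ n) : f = g := by
  obtain ⟨m, rfl | rfl⟩ := Int.eq_nat_or_neg n
  · simp only [zpow_natCast] at hfg
    exact hG m (by omega) f g hfg
  · simp only [zpow_neg, inv_inj, zpow_natCast] at hfg
    exact hG m (by omega) f g hfg

theorem zpow_mem_zpowers_zpow_iff (hG : HasUniqueRoots G) {n : ℤ} (hn : n ≠ 0) {x y : G} :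
    y ^ n ∈ zpowers (x ^ n) ↔ y ∈ zpowers x := by
  simp only [mem_zpowers_iff]
  refine exists_congr fun k ↦ ?_
  rw [← zpow_mul, zpow_mul']
  exact ⟨hG.zpow_injective hn, congrArg (· ^ n)⟩

theorem zpowers_zpow_eq_zpowers_zpow_iff (hG : HasUniqueRoots G) {n : ℤ} (hn : n ≠ 0) {x y : G} :
    zpowers (y ^ n) = zpowers (x ^ n) ↔ zpowers y = zpowers x := by
  simp only [le_antisymm_iff, zpowers_le, hG.zpow_mem_zpowers_zpow_iff hn]

theorem normalizer_zpowers_zpow (hG : HasUniqueRoots G) {n : ℤ} (hn : n ≠ 0) (x : G) :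
    normalizer (zpowers (x ^ n) : Set G) = normalizer (zpowers x : Set G) := by
  ext g
  simp only [mem_normalizer_iff_map_conj_eq, MonoidHom.map_zpowers, map_zpow,
    hG.zpowers_zpow_eq_zpowers_zpow_iff hn]

end HasUniqueRoots

theorem normalizer_eq_of_infinite_inter_general (G : Type*) [Group G]
    (h : ∀ m : ℕ, 0 < m → ∀ f g : G, f ^ m = g ^ m → f = g)
    (c d : G)
    (hcd : ((Subgroup.zpowers c ⊓ Subgroup.zpowers d : Subgroup G) : Set G).Infinite) :
    Subgroup.normalizer (Subgroup.zpowers c : Set G) = Subgroup.normalizer (Subgroup.zpowers d : Set G) := by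
  obtain ⟨x, hx, hx1⟩ := hcd.nontrivial.exists_ne 1
  obtain ⟨hxc, hxd⟩ := mem_inf.mp hx
  obtain ⟨s, rfl⟩ := mem_zpowers_iff.mp hxc
  obtain ⟨t, hts⟩ := mem_zpowers_iff.mp hxd
  have hs : s ≠ 0 := by rintro rfl; exact hx1 (zpow_zero c)
  have ht : t ≠ 0 := by rintro rfl; exact hx1 (hts ▸ zpow_zero d)
  rw [← HasUniqueRoots.normalizer_zpowers_zpow h hs c,
    ← HasUniqueRoots.normalizer_zpowers_zpow h ht d, hts]

theorem normalizer_eq_of_infinite_inter (G : Type*) [Group G]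
    (h : ∀ m : ℕ, 0 < m → ∀ f g : G, f ^ m = g ^ m → f = g)
    (c d : G) (hc : ¬ IsOfFinOrder c) (hd : ¬ IsOfFinOrder d)
    (hcd : ((Subgroup.zpowers c ⊓ Subgroup.zpowers d : Subgroup G) : Set G).Infinite) :
    Subgroup.normalizer (Subgroup.zpowers c : Set G) = Subgroup.normalizer (Subgroup.zpowers d : Set G) :=
  normalizer_eq_of_infinite_inter_general G h c d hcd
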